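/- arXiv:2306.10966 — 4 statements merged into one kernel-verified Lean document; each statement's English description precedes it below -/
import Mathlib

section
/- Define S(z) = a e^z + (1/2) e^{2āz} + ā - z⁻¹(e^z - 1) for z ≠ 0, where a = (1/4)(1 - i/√3) and ā = (1/4)(1 + i/√3). Then for all real z with z ≥ 0, |S(z)| ≤ z³ e^z. -/
/-!
Subtracting Taylor polynomials, `S z = a R₃(z) + ½ R₃(2āz) - z⁻¹ R₄(z)` with
`Rₙ(w) = e^w - ∑_{m<n} w^m/m!`: the polynomial parts cancel because `a + ā = 1/2` and
`a ā = 1/12`. Each remainder satisfies `‖Rₙ(w)‖ ≤ ‖w‖ⁿ/n! e^‖w‖`, and `‖a‖ = ‖ā‖ = 1/√12`,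
so for `z > 0` all three terms are bounded by `z³ e^z` times `1/12`, `1/12` and `1/24`.
-/

noncomputable def a : ℂ := (1/4) * (1 - Complex.I / Real.sqrt 3)
noncomputable def abar : ℂ := (1/4) * (1 + Complex.I / Real.sqrt 3)

/-- The defect function `S`, defined by the formula for `z ≠ 0` and extended
continuously by `S 0 = 0` (consistent with its Taylor series starting at `z³`). -/
noncomputable def S (z : ℂ) : ℂ :=
  if z = 0 then 0 else
    a * Complex.exp z + (1/2) * Complex.exp (2 * abar * z) + abar
      - z⁻¹ * (Complex.exp z - 1)

open Complex ComplexConjugate Finset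
open scoped Nat

noncomputable def expTail (n : ℕ) (w : ℂ) : ℂ :=
  exp w - ∑ m ∈ range n, w ^ m / m !

lemma hasSum_expTail (n : ℕ) (w : ℂ) :
    HasSum (fun k ↦ w ^ (k + n) / (k + n) !) (expTail n w) := by
  rw [expTail, exp_eq_exp_ℂ]
  exact (hasSum_nat_add_iff' n).mpr (NormedSpace.expSeries_div_hasSum_exp w)

lemma norm_expTail_le (n : ℕ) (w : ℂ) :
    ‖expTail n w‖ ≤ ‖w‖ ^ n / n ! * Real.exp ‖w‖ := by
  have hmajor : HasSum (fun k ↦ ‖w‖ ^ n / n ! * (‖w‖ ^ k / k !))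
      (‖w‖ ^ n / n ! * Real.exp ‖w‖) := by
    rw [Real.exp_eq_exp_ℝ]
    exact (NormedSpace.expSeries_div_hasSum_exp ‖w‖).mul_left _
  refine (hasSum_expTail n w).norm_le_of_bounded hmajor fun k ↦ ?_
  have hfact : (n ! * k ! : ℝ) ≤ (k + n) ! := by
    exact_mod_cast Nat.le_of_dvd (Nat.factorial_pos _)
      (mul_comm k ! n ! ▸ Nat.factorial_mul_factorial_dvd_factorial_add k n)
  calc ‖w ^ (k + n) / ((k + n) ! : ℂ)‖ = ‖w‖ ^ n * ‖w‖ ^ k / (k + n) ! := by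
        rw [norm_div, norm_pow, norm_natCast, pow_add, mul_comm]
    _ ≤ ‖w‖ ^ n * ‖w‖ ^ k / (n ! * k !) := by gcongr
    _ = ‖w‖ ^ n / n ! * (‖w‖ ^ k / k !) := (div_mul_div_comm ..).symm

lemma norm_expTail_le_of_norm_le {n : ℕ} {w : ℂ} {r : ℝ} (h : ‖w‖ ≤ r) :
    ‖expTail n w‖ ≤ r ^ n / n ! * Real.exp r := by
  have hr : 0 ≤ r := (norm_nonneg w).trans h
  exact (norm_expTail_le n w).trans (by gcongr)

lemma abar_eq_conj_a : abar = conj a := by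
  simp [a, abar, map_ofNat, sub_eq_add_neg, neg_div]

lemma a_add_abar : a + abar = 1 / 2 := by
  simp only [a, abar]; ring

lemma a_mul_abar : a * abar = 1 / 12 := by
  have h3 : (Real.sqrt 3 : ℂ) ^ 2 = 3 := by
    exact_mod_cast Real.sq_sqrt (by norm_num : (0:ℝ) ≤ 3)
  have h3' : (Real.sqrt 3 : ℂ) ≠ 0 := by exact_mod_cast (by positivity : Real.sqrt 3 ≠ 0)
  simp only [a, abar]
  field_simp
  linear_combination (-12) * I_sq - 4 * h3

lemma norm_a_sq : ‖a‖ ^ 2 = 1 / 12 := by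
  rw [← ofReal_inj, ofReal_pow, ← mul_conj', ← abar_eq_conj_a, a_mul_abar]; norm_num

lemma norm_a_le : ‖a‖ ≤ 1 / 2 := by
  nlinarith [norm_a_sq, norm_nonneg a]

lemma norm_abar_le : ‖abar‖ ≤ 1 / 2 := by
  rw [abar_eq_conj_a, norm_conj]; exact norm_a_le

lemma S_eq_expTail (z : ℂ) (hz : z ≠ 0) :
    S z = a * expTail 3 z + 1 / 2 * expTail 3 (2 * abar * z) - z⁻¹ * expTail 4 z := by
  have habar : abar = 1 / 2 - a := by rw [← a_add_abar]; ring
  have ha : a * (1 / 2 - a) = 1 / 12 := habar ▸ a_mul_abar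
  simp only [S, if_neg hz, expTail, sum_range_succ, sum_range_zero, habar]
  field_simp
  norm_num [Nat.factorial]
  linear_combination (-24 * z ^ 3) * ha

theorem stmt4 : ∀ z : ℝ, 0 ≤ z → ‖S z‖ ≤ z ^ 3 * Real.exp z := by
  intro z hz
  rcases hz.eq_or_lt with rfl | hz
  · simp [S]
  have hnorm : ‖(z : ℂ)‖ = z := by rw [norm_real, Real.norm_of_nonneg hz.le]
  have hw : ‖2 * abar * z‖ ≤ z := by
    rw [norm_mul, norm_mul, hnorm, Complex.norm_ofNat]; nlinarith [norm_abar_le]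
  have hE := norm_expTail_le_of_norm_le (n := 3) hnorm.le
  have hF := norm_expTail_le_of_norm_le (n := 3) hw
  have hG := norm_expTail_le_of_norm_le (n := 4) hnorm.le
  rw [S_eq_expTail _ (ofReal_ne_zero.mpr hz.ne')]
  calc _ ≤ ‖a‖ * ‖expTail 3 z‖ + 1 / 2 * ‖expTail 3 (2 * abar * z)‖
        + z⁻¹ * ‖expTail 4 z‖ := by
        refine (norm_sub_le _ _).trans ?_
        simp only [norm_mul, norm_inv, hnorm]
        gcongr
        refine (norm_add_le _ _).trans_eq ?_
        simp
    _ ≤ 1 / 2 * (z ^ 3 / 3 ! * Real.exp z) + 1 / 2 * (z ^ 3 / 3 ! * Real.exp z)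
        + z⁻¹ * (z ^ 4 / 4 ! * Real.exp z) := by gcongr; exact norm_a_le
    _ ≤ z ^ 3 * Real.exp z := by
        field_simp
        norm_num [Nat.factorial]
end

section
/- Define S(z) = a e^z + (1/2) e^{2āz} + ā - z⁻¹(e^z - 1) with a = (1/4)(1 - i/√3), ā = (1/4)(1 + i/√3). For real z ≤ -1, the real part of S(z) satisfies (Re S(z))² ≤ 6/5. -/
/-!
For real `z` the real part of `S z` is
`(eᶻ + 1)/4 + (1/2) e^{z/2} cos (z/√12) - (eᶻ - 1)/z`.
For `z ≤ -1` the first term lies in `[1/4, 1/2]`, the second in `[-1/3, 1/3]` because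
`e^{z/2} ≤ e^{-1/2} ≤ 2/3`, and the difference quotient in `[0, 1]` by convexity of `exp`.
Hence `-13/12 ≤ Re S z ≤ 5/6`, and `(13/12)² = 169/144 < 6/5`.
-/

open Real

lemma exp_mul_one_sub_le_one (x : ℝ) : exp x * (1 - x) ≤ 1 := by
  rcases le_total x 1 with hx | hx
  · calc exp x * (1 - x) ≤ exp x * exp (-x) :=
          mul_le_mul_of_nonneg_left (one_sub_le_exp_neg x) (exp_pos x).le
      _ = 1 := by rw [← exp_add, add_neg_cancel, exp_zero]
  · nlinarith [exp_pos x]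

lemma exp_sub_one_div_mem_Icc_of_neg {x : ℝ} (hx : x < 0) :
    (exp x - 1) / x ∈ Set.Icc 0 1 := by
  have hlow := add_one_le_exp x
  have hlt : exp x < 1 := exp_lt_one_iff.mpr hx
  constructor
  · exact div_nonneg_of_nonpos (by linarith) hx.le
  · rw [div_le_one_of_neg hx]
    linarith

lemma re_S_ofReal {z : ℝ} (hz : z ≠ 0) :
    (S z).re = (exp z + 1) / 4 + exp (z / 2) * cos (z / (2 * √3)) / 2 - (exp z - 1) / z := by
  have hexp : Complex.exp (2 * abar * z) =
      exp (z / 2) * (cos (z / (2 * √3)) + sin (z / (2 * √3)) * Complex.I) := by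
    rw [Complex.ofReal_cos, Complex.ofReal_sin, ← Complex.exp_mul_I, Complex.ofReal_exp,
      ← Complex.exp_add, abar]
    congr 1
    push_cast
    field_simp
    ring
  rw [S, if_neg (Complex.ofReal_ne_zero.mpr hz), hexp, a, abar, ← Complex.ofReal_exp,
    ← Complex.ofReal_inv]
  simp only [Complex.add_re, Complex.sub_re, Complex.mul_re, Complex.mul_im, Complex.add_im,
    Complex.sub_im, Complex.div_re, Complex.div_im, Complex.ofReal_re, Complex.ofReal_im,
    Complex.I_re, Complex.I_im, Complex.one_re, Complex.one_im, Complex.normSq_ofReal]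
  norm_num
  field_simp
  ring

lemma abs_re_S_le {z : ℝ} (hz : z ≤ -1) : |(S z).re| ≤ 13 / 12 := by
  have hneg : z < 0 := by linarith
  rw [re_S_ofReal hneg.ne]
  have he : exp z ≤ 1 := exp_le_one_iff.mpr hneg.le
  have he_half : exp (z / 2) ≤ 2 / 3 := by
    nlinarith [exp_mul_one_sub_le_one (z / 2), exp_pos (z / 2)]
  have hosc : |exp (z / 2) * cos (z / (2 * √3))| ≤ 2 / 3 := by
    rw [abs_mul, abs_of_pos (exp_pos _)]
    nlinarith [abs_cos_le_one (z / (2 * √3)), abs_nonneg (cos (z / (2 * √3)))]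
  obtain ⟨hq0, hq1⟩ := exp_sub_one_div_mem_Icc_of_neg hneg
  rw [abs_le] at hosc ⊢
  constructor <;> linarith [exp_pos z]

theorem stmt8 : ∀ z : ℝ, z ≤ -1 → (S z).re ^ 2 ≤ 6/5 := by
  intro z hz
  calc (S z).re ^ 2 = |(S z).re| ^ 2 := (sq_abs _).symm
    _ ≤ (13 / 12) ^ 2 := by gcongr; exact abs_re_S_le hz
    _ ≤ 6 / 5 := by norm_num
end

section
/- Define S(z) = a e^z + (1/2) e^{2āz} + ā - z⁻¹(e^z - 1) with a = (1/4)(1 - i/√3), ā = (1/4)(1 + i/√3). For real z ≤ -1, the imaginary part satisfies (Im S(z))² ≤ 3/10. -/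
/-!
For real `z ≠ 0` only `a e^z`, `ā` and `e^{2āz} = e^{z/2}(cos(z/(2√3)) + i sin(z/(2√3)))` contribute
to the imaginary part, so `Im S(z) = (1 - e^z)/(4√3) + e^{z/2} sin(z/(2√3))/2`. For `z ≤ -1` the
squares of the two summands are at most `1/48` and `e^{-1}/4`, hence
`(Im S)² ≤ 1/24 + e^{-1}/2 < 3/10` because `e^{-1} < 1/2`.
-/

open Real

lemma a_im : a.im = -1 / (4 * √3) := by
  simp [a, Complex.div_im]
  field_simp
  norm_num

lemma abar_re : abar.re = 1 / 4 := by
  simp [abar, Complex.div_re]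

lemma abar_im : abar.im = 1 / (4 * √3) := by
  simp [abar, Complex.div_im]
  field_simp
  norm_num

lemma S_ofReal_im {z : ℝ} (hz : z ≠ 0) :
    (S z).im = (1 - rexp z) / (4 * √3) + rexp (z / 2) * sin (z / (2 * √3)) / 2 := by
  have hexp_re : (2 * abar * z).re = z / 2 := by
    simp [Complex.mul_re, abar_re]; ring
  have hexp_im : (2 * abar * z).im = z / (2 * √3) := by
    simp [Complex.mul_im, abar_im]; field_simp; norm_num
  rw [S, if_neg (Complex.ofReal_ne_zero.mpr hz)]
  simp only [Complex.sub_im, Complex.add_im, Complex.mul_im, Complex.exp_im, hexp_re, hexp_im,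
    a_im, abar_im, ← Complex.ofReal_exp, ← Complex.ofReal_inv, ← Complex.ofReal_one,
    ← Complex.ofReal_sub, Complex.ofReal_re, Complex.ofReal_im]
  norm_num
  ring

lemma sq_one_sub_exp_div_le {z : ℝ} (hz : z ≤ 0) :
    ((1 - rexp z) / (4 * √3)) ^ 2 ≤ 1 / 48 := by
  have h1 : 0 ≤ 1 - rexp z := by linarith [exp_le_one_iff.mpr hz]
  have h2 : 1 - rexp z ≤ 1 := by linarith [exp_pos z]
  rw [div_pow, mul_pow, sq_sqrt (by norm_num : (0:ℝ) ≤ 3),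
    div_le_div_iff₀ (by norm_num) (by norm_num)]
  nlinarith

lemma sq_exp_half_mul_sin_div_le (z w : ℝ) : (rexp (z / 2) * sin w / 2) ^ 2 ≤ rexp z / 4 := by
  have hexp : rexp (z / 2) ^ 2 = rexp z := by rw [sq, ← exp_add, add_halves]
  calc (rexp (z / 2) * sin w / 2) ^ 2 = rexp z * sin w ^ 2 / 4 := by rw [← hexp]; ring
    _ ≤ rexp z / 4 := by gcongr; nlinarith [exp_pos z, sin_sq_le_one w]

theorem stmt9 : ∀ z : ℝ, z ≤ -1 → (S z).im ^ 2 ≤ 3/10 := by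
  intro z hz
  rw [S_ofReal_im (by linarith)]
  have hA := sq_one_sub_exp_div_le (show z ≤ 0 by linarith)
  have hB := sq_exp_half_mul_sin_div_le z (z / (2 * √3))
  have hexp : rexp z ≤ rexp (-1) := exp_le_exp.mpr hz
  linarith [add_sq_le (a := (1 - rexp z) / (4 * √3)) (b := rexp (z / 2) * sin (z / (2 * √3)) / 2),
    exp_neg_one_lt_half]
end

section
/- Let A be self-adjoint with eigenvalues λ_j ≤ -μ < 0 satisfying ‖A e^{tA}‖ ≤ C/t for t > 0 (parabolic smoothing). Let δ_{k+1} = A w_{k+1} with ‖w_{k+1}‖ ≤ K τ⁴ and also ‖δ_{k+1}‖ ≤ K τ³ for all k. Then for nτ ≤ T, ‖∑_{k=0}^{n-1} e^{(n-k-1)τA} δ_{k+1}‖ ≤ C' τ³ (1 + |log τ|) for τ small, with C' independent of n and τ. -/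
/-!
Split off the last term `k = n - 1`, where `P 0 = 1` and `‖δ n‖ ≤ K τ³`. Every other term is
`P (n-k-1) (A w_{k+1})`, so parabolic smoothing and `‖w‖ ≤ K τ⁴` bound it by `C K τ³ / (n-k-1)`;
these add up to `C K τ³` times a harmonic number, which is at most `1 + log (T / τ)`.
-/

open Finset Real

lemma harmonic_eq_sum_range_inv_sub (n : ℕ) :
    (harmonic n : ℝ) = ∑ k ∈ range n, ((n - k : ℕ) : ℝ)⁻¹ := by
  rw [← sum_range_reflect]
  simp only [harmonic, Rat.cast_sum, Rat.cast_inv, Rat.cast_natCast]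
  refine sum_congr rfl fun k hk => ?_
  congr 2
  have := mem_range.mp hk
  omega

lemma harmonic_le_one_add_abs_log_add_abs_log {n : ℕ} {τ T : ℝ} (hτ : 0 < τ)
    (hnT : n * τ ≤ T) : (harmonic n : ℝ) ≤ 1 + |log T| + |log τ| := by
  have hlog_n : log n ≤ |log T| + |log τ| := by
    rcases Nat.eq_zero_or_pos n with rfl | hn
    · simp only [Nat.cast_zero, log_zero]
      positivity
    have hn' : (0 : ℝ) < n := by exact_mod_cast hn
    have hT : 0 < T := (mul_pos hn' hτ).trans_le hnT
    calc log n ≤ log (T / τ) := log_le_log hn' ((le_div_iff₀ hτ).mpr hnT)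
      _ = log T - log τ := log_div hT.ne' hτ.ne'
      _ ≤ |log T| + |log τ| := by linarith [le_abs_self (log T), neg_abs_le (log τ)]
  linarith [harmonic_le_one_add_log n]

section Accumulation

variable {𝕜 E F G : Type*} [NontriviallyNormedField 𝕜] [SeminormedAddCommGroup E]
  [NormedSpace 𝕜 E] [SeminormedAddCommGroup F] [NormedSpace 𝕜 F] [SeminormedAddCommGroup G]
  [NormedSpace 𝕜 G]

lemma norm_apply_apply_le_of_smoothing {P : F →L[𝕜] G} {A : E →L[𝕜] F} {w : E} {C K τ : ℝ} {m : ℕ}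
    (hm : 1 ≤ m) (hPA : ‖P.comp A‖ ≤ C / (m * τ)) (hw : ‖w‖ ≤ K * τ ^ 4) :
    ‖P (A w)‖ ≤ C * K * τ ^ 3 * (m : ℝ)⁻¹ := by
  have hm' : (m : ℝ) ≠ 0 := by positivity
  calc ‖P (A w)‖ ≤ ‖P.comp A‖ * ‖w‖ := (P.comp A).le_opNorm w
    _ ≤ C / (m * τ) * (K * τ ^ 4) :=
      mul_le_mul hPA hw (norm_nonneg _) ((norm_nonneg _).trans hPA)
    _ = C * K * τ ^ 3 * (m : ℝ)⁻¹ := by field_simp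

lemma norm_sum_range_succ_le_add_harmonic {P : ℕ → E →L[𝕜] E} {A : E →L[𝕜] E}
    {δ w : ℕ → E} {C K τ : ℝ} (hP0 : P 0 = 1)
    (hPA : ∀ m : ℕ, 1 ≤ m → ‖(P m).comp A‖ ≤ C / (m * τ))
    (hδA : ∀ k : ℕ, δ (k + 1) = A (w (k + 1))) (hw : ∀ k : ℕ, ‖w (k + 1)‖ ≤ K * τ ^ 4)
    (hδ : ∀ k : ℕ, ‖δ (k + 1)‖ ≤ K * τ ^ 3) (n : ℕ) :
    ‖∑ k ∈ range (n + 1), P (n + 1 - k - 1) (δ (k + 1))‖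
      ≤ K * τ ^ 3 + C * K * τ ^ 3 * harmonic n := by
  have hlast : ‖P (n + 1 - n - 1) (δ (n + 1))‖ ≤ K * τ ^ 3 := by
    simpa [hP0] using hδ n
  have hterm : ∀ k ∈ range n,
      ‖P (n + 1 - k - 1) (δ (k + 1))‖ ≤ C * K * τ ^ 3 * ((n - k : ℕ) : ℝ)⁻¹ := by
    intro k hk
    have hk : k < n := mem_range.mp hk
    rw [show n + 1 - k - 1 = n - k by omega, hδA k]
    exact norm_apply_apply_le_of_smoothing (by omega) (hPA _ (by omega)) (hw k)
  have hhead : ‖∑ k ∈ range n, P (n + 1 - k - 1) (δ (k + 1))‖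
      ≤ C * K * τ ^ 3 * harmonic n := by
    rw [harmonic_eq_sum_range_inv_sub, mul_sum]
    exact (norm_sum_le _ _).trans (sum_le_sum hterm)
  rw [sum_range_succ]
  linarith [norm_add_le (∑ k ∈ range n, P (n + 1 - k - 1) (δ (k + 1)))
    (P (n + 1 - n - 1) (δ (n + 1)))]

end Accumulation

/-- Global error accumulation. `P m` plays the role of `e^{mτA}` (so `P 0 = I`),
`A` of the generator, and the parabolic smoothing bound `‖A e^{tA}‖ ≤ C/t` at
`t = mτ` reads `‖(P m).comp A‖ ≤ C/(mτ)`. -/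
theorem stmt18_general {H : Type*} [NormedAddCommGroup H] [InnerProductSpace ℂ H]
    (T C K : ℝ) (hC : 0 < C) (hK : 0 < K) :
    ∃ C' : ℝ, 0 < C' ∧
      ∀ (τ : ℝ) (n : ℕ) (A : H →L[ℂ] H) (P : ℕ → H →L[ℂ] H) (δ w : ℕ → H),
        0 < τ → τ ≤ 1 → (n : ℝ) * τ ≤ T →
        P 0 = 1 →
        (∀ m : ℕ, 1 ≤ m → ‖(P m).comp A‖ ≤ C / (m * τ)) →
        (∀ k : ℕ, δ (k + 1) = A (w (k + 1))) →
        (∀ k : ℕ, ‖w (k + 1)‖ ≤ K * τ ^ 4) →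
        (∀ k : ℕ, ‖δ (k + 1)‖ ≤ K * τ ^ 3) →
        ‖∑ k ∈ Finset.range n, P (n - k - 1) (δ (k + 1))‖
          ≤ C' * τ ^ 3 * (1 + |Real.log τ|) := by
  refine ⟨K * (1 + C * (1 + |log T|)), by positivity, ?_⟩
  intro τ n A P δ w hτ _ hnT hP0 hPA hδA hw hδ
  rcases n with _ | m
  · simp only [range_zero, sum_empty, norm_zero]
    positivity
  have hm : (m : ℝ) * τ ≤ T := by push_cast at hnT; linarith
  have hH := harmonic_le_one_add_abs_log_add_abs_log hτ hm
  calc _ ≤ K * τ ^ 3 + C * K * τ ^ 3 * harmonic m :=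
        norm_sum_range_succ_le_add_harmonic hP0 hPA hδA hw hδ m
    _ ≤ K * τ ^ 3 + C * K * τ ^ 3 * (1 + |log T| + |log τ|) := by gcongr
    _ ≤ K * (1 + C * (1 + |log T|)) * τ ^ 3 * (1 + |log τ|) := by
      have h₁ : 0 ≤ K * τ ^ 3 * |log τ| := by positivity
      have h₂ : 0 ≤ C * K * τ ^ 3 * |log T| * |log τ| := by positivity
      linarith

/-- Global error accumulation. `P m` plays the role of `e^{mτA}` (so `P 0 = I`),
`A` of the generator, and the parabolic smoothing bound `‖A e^{tA}‖ ≤ C/t` at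
`t = mτ` reads `‖(P m).comp A‖ ≤ C/(mτ)`. The constant `C'` depends only on
`T`, `C` and `K`, not on `n` or `τ`. -/
theorem stmt18 {H : Type*} [NormedAddCommGroup H] [InnerProductSpace ℂ H]
    (T C K : ℝ) (hT : 0 < T) (hC : 0 < C) (hK : 0 < K) :
    ∃ C' : ℝ, 0 < C' ∧
      ∀ (τ : ℝ) (n : ℕ) (A : H →L[ℂ] H) (P : ℕ → H →L[ℂ] H) (δ w : ℕ → H),
        0 < τ → τ ≤ 1 → (n : ℝ) * τ ≤ T →
        P 0 = 1 →
        (∀ m : ℕ, 1 ≤ m → ‖(P m).comp A‖ ≤ C / (m * τ)) →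
        (∀ k : ℕ, δ (k + 1) = A (w (k + 1))) →
        (∀ k : ℕ, ‖w (k + 1)‖ ≤ K * τ ^ 4) →
        (∀ k : ℕ, ‖δ (k + 1)‖ ≤ K * τ ^ 3) →
        ‖∑ k ∈ Finset.range n, P (n - k - 1) (δ (k + 1))‖
          ≤ C' * τ ^ 3 * (1 + |Real.log τ|) :=
  stmt18_general T C K hC hK
end
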